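/- arXiv:1002.2752 — 2 statements merged into one kernel-verified Lean document; each statement's English description precedes it below -/
import Mathlib

section
/- The sphere U₄' = {x ∈ E | N(x) = −(z − z⁻¹)²} is equal to (z − z⁻¹)·U₄, where U₄ = {x ∈ E | N(x) = 1}. -/
/-!
At `z = ±1` we have `z = z⁻¹`, so conjugation disappears and `N x` evaluates to a sum of four
integer squares, while `z - z⁻¹` evaluates to `0`. Hence `N x = -(z - z⁻¹)²` forces every
coordinate of `x` to vanish at `1` and at `-1`, i.e. to be divisible by
`(z - 1)(z + 1) = z (z - z⁻¹)`. Writing `x = (z - z⁻¹) y` gives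
`N x = (z - z⁻¹)(z - z⁻¹)* N y = -(z - z⁻¹)² N y`, and cancelling in the domain `A` leaves
`N y = 1`. The same identity gives the reverse inclusion.
-/

open LaurentPolynomial

/-- `A = ℤ[z, z⁻¹]`, the Laurent polynomial ring over the integers. -/
abbrev A : Type := LaurentPolynomial ℤ

/-- The conjugation `f(z) ↦ f(z⁻¹)` on `A`. -/
noncomputable def conj : A →+* A := (LaurentPolynomial.invert (R := ℤ)).toRingEquiv.toRingHom

/-- The fixed subring `A₀ = {f ∈ A | f* = f}`. -/
noncomputable def A0 : Subring A := RingHom.eqLocus conj (RingHom.id A)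

/-- `E = A⁴`. -/
abbrev E : Type := Fin 4 → A

/-- The norm `N(x) = ∑ₖ xₖ xₖ*`. -/
noncomputable def N (x : E) : A := ∑ k, x k * conj (x k)

/-- The standard `A`-basis vectors of `E = A⁴`. -/
noncomputable def e (k : Fin 4) : E := Pi.single k 1

/-- Yang's multiplication `x ∘ y = (p, q, r, s)`. -/
noncomputable def yang (x y : E) : E :=
  ![x 0 * y 0 - x 1 * conj (y 1) - x 2 * conj (y 2) - x 3 * conj (y 3),
    x 0 * y 1 + x 1 * conj (y 0) + conj (x 2) * conj (y 3) - conj (x 3) * conj (y 2),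
    x 0 * y 2 - conj (x 1) * conj (y 3) + x 2 * conj (y 0) + conj (x 3) * conj (y 1),
    x 0 * y 3 + conj (x 1) * conj (y 2) - conj (x 2) * conj (y 1) + x 3 * conj (y 0)]

namespace LaurentPolynomial

variable {R S : Type*}

theorem eval₂_invert [CommSemiring R] [CommSemiring S] (f : R →+* S) (x : Sˣ) (p : R[T;T⁻¹]) :
    eval₂ f x (invert p) = eval₂ f x⁻¹ p := by
  induction p using LaurentPolynomial.induction_on' with
  | add p q hp hq => simp only [map_add, hp, hq]
  | C_mul_T n a => simp [zpow_neg]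

theorem T_sub_C_dvd_of_eval₂_eq_zero [CommRing R] {a : Rˣ} {p : R[T;T⁻¹]}
    (h : eval₂ (RingHom.id R) a p = 0) : T 1 - C (a : R) ∣ p := by
  obtain ⟨n, q, hq⟩ := p.exists_T_pow
  have hroot : q.IsRoot a := by
    simpa [h] using congrArg (eval₂ (RingHom.id R) a) hq
  obtain ⟨r, rfl⟩ := Polynomial.dvd_iff_isRoot.mpr hroot
  rw [← (isUnit_T (n : ℤ)).dvd_mul_right, ← hq, map_mul, map_sub, Polynomial.toLaurent_X,
    Polynomial.toLaurent_C]
  exact dvd_mul_right _ _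

theorem mul_T_sub_C_dvd_of_eval₂_eq_zero [CommRing R] [IsDomain R] {a b : Rˣ} (hab : a ≠ b)
    {p : R[T;T⁻¹]} (ha : eval₂ (RingHom.id R) a p = 0) (hb : eval₂ (RingHom.id R) b p = 0) :
    (T 1 - C (a : R)) * (T 1 - C (b : R)) ∣ p := by
  obtain ⟨q, rfl⟩ := T_sub_C_dvd_of_eval₂_eq_zero ha
  refine mul_dvd_mul_left _ (T_sub_C_dvd_of_eval₂_eq_zero ?_)
  have hba : (b : R) - a ≠ 0 := sub_ne_zero.mpr (Units.val_injective.ne hab.symm)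
  simpa [hba] using hb

theorem T_one_sub_T_neg_one_eq [CommRing R] :
    (T 1 - T (-1) : R[T;T⁻¹]) = T (-1) * ((T 1 - C 1) * (T 1 - C (-1))) := by
  have h : (T (-1) * T 1 * T 1 : R[T;T⁻¹]) = T 1 := by rw [← T_add, ← T_add]; norm_num
  simp only [map_one, map_neg]
  linear_combination -h

theorem T_one_sub_T_neg_one_ne_zero [Ring R] [Nontrivial R] :
    (T 1 - T (-1) : R[T;T⁻¹]) ≠ 0 := by
  refine sub_ne_zero.mpr fun h => ?_
  simpa [T_apply] using congrArg (fun f : R[T;T⁻¹] => f.coeff 1) h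

end LaurentPolynomial

lemma conj_apply (f : A) : conj f = invert f := rfl

lemma conj_T_one_sub_T_neg_one : conj (T 1 - T (-1)) = -(T 1 - T (-1)) := by
  simp [conj_apply]

lemma eval₂_T_one_sub_T_neg_one (u : ℤˣ) : eval₂ (RingHom.id ℤ) u (T 1 - T (-1)) = 0 := by
  simp [zpow_neg, Int.units_inv_eq_self]

lemma eval₂_conj (u : ℤˣ) (f : A) :
    eval₂ (RingHom.id ℤ) u (conj f) = eval₂ (RingHom.id ℤ) u f := by
  rw [conj_apply, eval₂_invert, Int.units_inv_eq_self]

lemma eval₂_N (u : ℤˣ) (x : E) :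
    eval₂ (RingHom.id ℤ) u (N x) = ∑ k, eval₂ (RingHom.id ℤ) u (x k) ^ 2 := by
  simp [N, eval₂_conj, sq]

lemma N_smul (c : A) (x : E) : N (c • x) = c * conj c * N x := by
  simp only [N, Finset.mul_sum, Pi.smul_apply, smul_eq_mul, map_mul]
  exact Finset.sum_congr rfl fun k _ => by ring

lemma eval₂_eq_zero_of_N_eq {x : E} (hx : N x = -(T 1 - T (-1)) ^ 2) (u : ℤˣ) (k : Fin 4) :
    eval₂ (RingHom.id ℤ) u (x k) = 0 := by
  have hsum : ∑ j, eval₂ (RingHom.id ℤ) u (x j) ^ 2 = 0 := by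
    rw [← eval₂_N, hx, map_neg, map_pow, eval₂_T_one_sub_T_neg_one, zero_pow two_ne_zero,
      neg_zero]
  have hsq := (Fintype.sum_eq_zero_iff_of_nonneg fun j => sq_nonneg _).mp hsum
  exact pow_eq_zero_iff two_ne_zero |>.mp (congrFun hsq k)

lemma T_one_sub_T_neg_one_dvd_of_N_eq {x : E} (hx : N x = -(T 1 - T (-1)) ^ 2) (k : Fin 4) :
    T 1 - T (-1) ∣ x k := by
  have h := mul_T_sub_C_dvd_of_eval₂_eq_zero (by decide)
    (eval₂_eq_zero_of_N_eq hx 1 k) (eval₂_eq_zero_of_N_eq hx (-1) k)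
  rw [T_one_sub_T_neg_one_eq, (isUnit_T (-1)).mul_left_dvd]
  simpa using h

/-- The sphere `U₄' = {x ∈ E | N(x) = −(z − z⁻¹)²}` equals `(z − z⁻¹) U₄`,
where `U₄ = {x ∈ E | N(x) = 1}`. -/
theorem U4'_eq :
    {x : E | N x = -(T 1 - T (-1)) ^ 2} =
      (fun x : E => (T 1 - T (-1) : A) • x) '' {x : E | N x = 1} := by
  ext x
  constructor
  · intro hx
    choose y hy using T_one_sub_T_neg_one_dvd_of_N_eq hx
    have hxy : x = (T 1 - T (-1) : A) • y := funext hy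
    refine ⟨y, ?_, hxy.symm⟩
    rw [Set.mem_ofPred_eq, hxy, N_smul, conj_T_one_sub_T_neg_one] at hx
    refine mul_left_cancel₀ (pow_ne_zero 2 T_one_sub_T_neg_one_ne_zero) ?_
    linear_combination -hx
  · rintro ⟨y, hy, rfl⟩
    rw [Set.mem_ofPred_eq, N_smul, hy, conj_T_one_sub_T_neg_one]
    ring
end

section
/- The orthogonal group O(N) admits the factorization O(N) = T Σ₄ Γ: every φ ∈ O(N) can be written as φ = σ β τ with σ ∈ T, β ∈ Σ₄ and τ ∈ Γ. -/
open LaurentPolynomial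

/-!
The constant coefficient of `N x` is the sum of the squares of all integer coefficients of `x`,
so a vector of norm `1` is `± zⁿ eⱼ`. Hence `φ` sends `eₘ` and `z eₘ` to `v eⱼ` and `w eⱼ'` with
units `v, w`. Since `φ` is additive it preserves the polar form `N (x + y) - N x - N y`; comparing
its values on `(eₘ, z eₘ)` gives `j = j'` and `v w* + w v* = z + z⁻¹`, i.e. `w = v z^{±1}`, and
on `(eₖ, eₗ)` it shows that `m ↦ j` is injective. As `zⁿ⁺¹ + zⁿ⁻¹ = (z + z⁻¹) zⁿ`, the elements
`1` and `z` span `A` over `A₀`, so these values determine the `A₀`-linear map `φ`.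
-/

lemma conj_coeff (f : A) (n : ℤ) : (conj f).coeff n = f.coeff (-n) := invert_apply f n

lemma conj_T (n : ℤ) : conj (T n) = T (-n) := invert_T n

lemma conj_conj (f : A) : conj (conj f) = f := invert.symm_apply_apply f

lemma T_mul_conj_T (n : ℤ) : T n * conj (T n) = 1 := by
  rw [conj_T, ← T_add, add_neg_cancel, T_zero]

lemma coeff_zero_mul_conj (f : A) :
    (f * conj f).coeff 0 = ∑ a ∈ f.coeff.support, f.coeff a ^ 2 := by
  rw [AddMonoidAlgebra.coeff_mul, Finsupp.sum]
  refine Finset.sum_congr rfl fun a ha => ?_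
  have h_neg_mem : -a ∈ (conj f).coeff.support := by
    rwa [Finsupp.mem_support_iff, conj_coeff, neg_neg, ← Finsupp.mem_support_iff]
  simp_rw [Finsupp.sum, add_eq_zero_iff_eq_neg']
  rw [Finset.sum_ite_eq' _ _ (fun c => f.coeff a * (conj f).coeff c), if_pos h_neg_mem,
    conj_coeff, neg_neg, sq]

lemma coeff_zero_mul_conj_nonneg (f : A) : 0 ≤ (f * conj f).coeff 0 := by
  rw [coeff_zero_mul_conj]
  exact Finset.sum_nonneg fun a _ => sq_nonneg _

lemma coeff_zero_mul_conj_pos {f : A} (hf : f ≠ 0) : 0 < (f * conj f).coeff 0 := by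
  rw [coeff_zero_mul_conj]
  have h_ne : f.coeff.support.Nonempty := by
    rw [Finsupp.support_nonempty_iff]
    exact fun h => hf (AddMonoidAlgebra.coeff_injective h)
  exact Finset.sum_pos (fun a ha => pow_two_pos_of_ne_zero (Finsupp.mem_support_iff.mp ha)) h_ne

lemma Finset.exists_eq_one_of_sum_eq_one {ι : Type*} {s : Finset ι} {g : ι → ℤ}
    (hg : ∀ i ∈ s, 0 ≤ g i) (h : ∑ i ∈ s, g i = 1) :
    ∃ i ∈ s, g i = 1 ∧ ∀ j ∈ s, j ≠ i → g j = 0 := by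
  classical
  obtain ⟨i, hi, hgi⟩ : ∃ i ∈ s, 0 < g i := by
    by_contra! h_nonpos
    linarith [Finset.sum_nonpos h_nonpos]
  have h_rest_nonneg : 0 ≤ ∑ j ∈ s.erase i, g j :=
    Finset.sum_nonneg fun j hj => hg j (Finset.mem_of_mem_erase hj)
  have h_split := Finset.add_sum_erase s g hi
  have hgi_one : g i = 1 := by omega
  refine ⟨i, hi, hgi_one, fun j hj hji => ?_⟩
  have h_rest_zero : ∑ j ∈ s.erase i, g j = 0 := by omega
  exact (Finset.sum_eq_zero_iff_of_nonneg fun j hj => hg j (Finset.mem_of_mem_erase hj)).mp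
    h_rest_zero j (Finset.mem_erase.mpr ⟨hji, hj⟩)

lemma exists_eq_T_of_mul_conj_eq_one {f : A} (hf : f * conj f = 1) :
    ∃ n, f = T n ∨ f = -T n := by
  have h_sum : ∑ a ∈ f.coeff.support, f.coeff a ^ 2 = 1 := by
    rw [← coeff_zero_mul_conj, hf, ← T_zero, T_apply, if_pos rfl]
  obtain ⟨n, -, hn, h_other⟩ :=
    Finset.exists_eq_one_of_sum_eq_one (fun a _ => sq_nonneg _) h_sum
  have h_supp : f.coeff.support ⊆ {n} := fun a ha =>
    Finset.mem_singleton.mpr <| by_contra fun han =>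
      Finsupp.mem_support_iff.mp ha (pow_eq_zero_iff two_ne_zero |>.mp (h_other a ha han))
  have hf_single : f = C (f.coeff n) * T n := by
    rw [← single_eq_C_mul_T]
    exact AddMonoidAlgebra.coeff_injective (Finsupp.support_subset_singleton.mp h_supp)
  refine ⟨n, ?_⟩
  rcases sq_eq_one_iff.mp hn with h | h <;> rw [h] at hf_single <;> simp [hf_single]

lemma N_coeff_zero (x : E) : (N x).coeff 0 = ∑ k, (x k * conj (x k)).coeff 0 := by
  rw [N, AddMonoidAlgebra.coeff_sum, Finsupp.finsetSum_apply]

lemma N_single (k : Fin 4) (v : A) : N (Pi.single k v) = v * conj v := by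
  rw [N, Finset.sum_eq_single k (fun j _ hj => by simp [Pi.single_eq_of_ne hj]) (by simp),
    Pi.single_eq_same]

lemma exists_eq_single_of_N_eq_one {x : E} (hx : N x = 1) :
    ∃ k v, v * conj v = 1 ∧ x = Pi.single k v := by
  have h_sum : ∑ k, (x k * conj (x k)).coeff 0 = 1 := by
    rw [← N_coeff_zero, hx, ← T_zero, T_apply, if_pos rfl]
  obtain ⟨k, -, -, h_other⟩ := Finset.exists_eq_one_of_sum_eq_one
    (fun k _ => coeff_zero_mul_conj_nonneg (x k)) h_sum
  have hx_single : x = Pi.single k (x k) := by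
    ext1 j
    rcases eq_or_ne j k with rfl | hjk
    · rw [Pi.single_eq_same]
    · rw [Pi.single_eq_of_ne hjk]
      by_contra hxj
      exact (coeff_zero_mul_conj_pos hxj).ne' (h_other j (Finset.mem_univ j) hjk)
  refine ⟨k, x k, ?_, hx_single⟩
  rwa [hx_single, N_single] at hx

lemma add_conj_ne_zero {r : A} (hr : r * conj r = 1) : r + conj r ≠ 0 := by
  obtain ⟨n, rfl | rfl⟩ := exists_eq_T_of_mul_conj_eq_one hr <;>
  · intro h
    have h_coeff := congrArg (fun f : A => f.coeff n) h
    simp only [map_neg, conj_T, AddMonoidAlgebra.coeff_add, AddMonoidAlgebra.coeff_neg,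
      AddMonoidAlgebra.coeff_zero, Finsupp.coe_zero, Pi.zero_apply, Finsupp.add_apply,
      Finsupp.neg_apply, T_apply] at h_coeff
    split_ifs at h_coeff <;> omega

lemma eq_T_of_add_conj_eq {r : A} (hr : r * conj r = 1) (h : r + conj r = T 1 + T (-1)) :
    r = T 1 ∨ r = T (-1) := by
  obtain ⟨n, rfl | rfl⟩ := exists_eq_T_of_mul_conj_eq_one hr
  all_goals
    have h_coeff := congrArg (fun f : A => f.coeff n) h
    have h_coeff_one := congrArg (fun f : A => f.coeff 1) h
    simp only [map_neg, conj_T, AddMonoidAlgebra.coeff_add, AddMonoidAlgebra.coeff_neg,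
      Finsupp.add_apply, Finsupp.neg_apply, T_apply] at h_coeff h_coeff_one
  · have hn : n = 1 ∨ n = -1 := by split_ifs at h_coeff <;> omega
    rcases hn with rfl | rfl <;> simp
  · exfalso
    split_ifs at h_coeff_one <;> omega

noncomputable def polar (x y : E) : A := ∑ k, (x k * conj (y k) + y k * conj (x k))

lemma N_add (x y : E) : N (x + y) = N x + N y + polar x y := by
  simp only [N, polar, Pi.add_apply, map_add, ← Finset.sum_add_distrib]
  exact Finset.sum_congr rfl fun k _ => by ring

lemma polar_map_eq {F : Type*} [FunLike F E E] [AddHomClass F E E] (φ : F)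
    (hφ : ∀ x, N (φ x) = N x) (x y : E) : polar (φ x) (φ y) = polar x y := by
  have h := hφ (x + y)
  rw [map_add, N_add, N_add, hφ, hφ] at h
  exact add_left_cancel h

lemma polar_single (i j : Fin 4) (a b : A) :
    polar (Pi.single i a) (Pi.single j b) = if i = j then a * conj b + b * conj a else 0 := by
  split_ifs with hij
  · subst hij
    rw [polar, Finset.sum_eq_single i (fun k _ hk => by simp [Pi.single_eq_of_ne hk]) (by simp)]
    simp
  · refine Finset.sum_eq_zero fun k _ => ?_
    rcases eq_or_ne k i with rfl | hki
    · simp [Pi.single_eq_of_ne hij]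
    · simp [Pi.single_eq_of_ne hki]

lemma conj_smul (c : A0) (f : A) : conj (c • f) = c • conj f := by
  rw [Subring.smul_def, smul_eq_mul, map_mul, show conj c = c from c.2]
  rfl

noncomputable def conjIf (b : Bool) : A →ₗ[A0] A :=
  if b then { toFun := conj, map_add' := map_add conj, map_smul' := conj_smul } else LinearMap.id

lemma conjIf_apply (b : Bool) (f : A) : conjIf b f = if b then conj f else f := by
  cases b <;> rfl

lemma T_one_add_T_neg_one_mem_A0 : (T 1 + T (-1) : A) ∈ A0 := by
  change conj _ = _
  rw [map_add, conj_T, conj_T, neg_neg, add_comm]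
  rfl

lemma span_one_T_one : Submodule.span A0 ({1, T 1} : Set A) = ⊤ := by
  set M := Submodule.span A0 ({1, T 1} : Set A)
  let t : A0 := ⟨T 1 + T (-1), T_one_add_T_neg_one_mem_A0⟩
  have h_T_mul : ∀ f ∈ M, T 1 * f ∈ M ∧ T (-1) * f ∈ M := by
    intro f hf
    have hTT : T 1 * T (-1) = (1 : A) := by rw [← T_add, add_neg_cancel, T_zero]
    obtain ⟨a, b, rfl⟩ := Submodule.mem_span_pair.mp hf
    constructor <;> apply Submodule.mem_span_pair.mpr
    -- the witnesses come from `T 1 * T 1 = t * T 1 - 1` and `T (-1) = t - T 1`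
    · refine ⟨-b, a + b * t, ?_⟩
      simp only [Subring.smul_def, smul_eq_mul, Subring.coe_add, Subring.coe_mul,
        Subring.coe_neg, t]
      linear_combination (b : A) * hTT
    · refine ⟨a * t + b, -a, ?_⟩
      simp only [Subring.smul_def, smul_eq_mul, Subring.coe_add, Subring.coe_mul,
        Subring.coe_neg, t]
      linear_combination -(b : A) * hTT
  have h_T : ∀ n, T n ∈ M := by
    intro n
    induction n using Int.induction_on with
    | zero => exact Submodule.subset_span (by simp)
    | succ n ih => rw [T_add, mul_comm]; exact (h_T_mul _ ih).1
    | pred n ih => rw [sub_eq_add_neg, T_add, mul_comm]; exact (h_T_mul _ ih).2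
  refine Submodule.eq_top_iff'.mpr fun f => f.induction_on' (fun _ _ => M.add_mem) ?_
  intro n a
  exact M.smul_mem ⟨C a, invert_C a⟩ (h_T n)

lemma mul_conj_mul_conj_eq_one {v w : A} (hv : v * conj v = 1) (hw : w * conj w = 1) :
    v * conj w * conj (v * conj w) = 1 := by
  rw [map_mul, conj_conj]
  linear_combination conj w * w * hv + hw

lemma exists_map_single_eq (φ : E →ₗ[A0] E) (hφ : ∀ x, N (φ x) = N x) (m : Fin 4) :
    ∃ j v b, v * conj v = 1 ∧ ∀ c, φ (Pi.single m c) = Pi.single j (v * conjIf b c) := by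
  obtain ⟨j, v, hv, h_one⟩ := exists_eq_single_of_N_eq_one (x := φ (Pi.single m 1))
    (by rw [hφ, N_single, map_one, mul_one])
  obtain ⟨j', w, hw, h_T⟩ := exists_eq_single_of_N_eq_one (x := φ (Pi.single m (T 1)))
    (by rw [hφ, N_single, T_mul_conj_T])
  have h_polar := polar_map_eq φ hφ (Pi.single m 1) (Pi.single m (T 1))
  rw [h_one, h_T, polar_single, polar_single, if_pos rfl, one_mul, map_one, mul_one] at h_polar
  obtain rfl : j = j' := by
    by_contra hjj
    rw [if_neg hjj, add_comm] at h_polar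
    exact add_conj_ne_zero (T_mul_conj_T 1) h_polar.symm
  rw [if_pos rfl, conj_T, add_comm] at h_polar
  have hw_eq : w = w * conj v * v := by linear_combination -w * hv
  obtain ⟨b, hb⟩ : ∃ b, w = v * conjIf b (T 1) := by
    rcases eq_T_of_add_conj_eq (mul_conj_mul_conj_eq_one hw hv)
      (by rw [map_mul, conj_conj]; linear_combination h_polar) with hr | hr
    · exact ⟨false, by rw [hw_eq, hr, conjIf_apply]; simp [mul_comm]⟩
    · exact ⟨true, by rw [hw_eq, hr, conjIf_apply]; simp [conj_T, mul_comm]⟩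
  refine ⟨j, v, b, hv, fun c => LinearMap.congr_fun (f := φ ∘ₗ LinearMap.single A0 _ m)
    (g := LinearMap.single A0 _ j ∘ₗ LinearMap.mulLeft A0 v ∘ₗ conjIf b)
    (LinearMap.ext_on span_one_T_one ?_) c⟩
  rintro c (rfl | rfl)
  · simp [h_one, conjIf_apply]
  · simp [h_T, hb]

lemma injective_of_map_single_eq (φ : E →ₗ[A0] E) (hφ : ∀ x, N (φ x) = N x)
    {j : Fin 4 → Fin 4} {v : Fin 4 → A} {b : Fin 4 → Bool} (hv : ∀ m, v m * conj (v m) = 1)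
    (h_single : ∀ m c, φ (Pi.single m c) = Pi.single (j m) (v m * conjIf (b m) c)) :
    Function.Injective j := by
  intro k l hkl
  by_contra hne
  have h_polar := polar_map_eq φ hφ (Pi.single k 1) (Pi.single l 1)
  rw [h_single, h_single, hkl, polar_single, polar_single, if_pos rfl, if_neg hne] at h_polar
  simp only [conjIf_apply, map_one, ite_self, mul_one] at h_polar
  refine add_conj_ne_zero (mul_conj_mul_conj_eq_one (hv k) (hv l)) ?_
  rw [map_mul, conj_conj, ← h_polar]
  ring

/-- The factorization `O(N) = T Σ₄ Γ`: every `A₀`-linear bijection `φ` of `E`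
preserving `N` is of the form `φ = σᵤ ∘ β ∘ τ` where `σᵤ ∈ T` multiplies the
coordinates by units `uₖ ∈ U₁`, `β ∈ Σ₄` permutes the coordinates, and `τ ∈ Γ`
conjugates some of the coordinates. -/
theorem O_N_factorization (φ : E ≃ₗ[A0] E) (hφ : ∀ x : E, N (φ x) = N x) :
    ∃ u : Fin 4 → A, (∀ k, u k * conj (u k) = 1) ∧
      ∃ (p : Equiv.Perm (Fin 4)) (ε : Fin 4 → Bool),
        ∀ (x : E) (k : Fin 4),
          φ x k = u k * (if ε (p k) then conj (x (p k)) else x (p k)) := by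
  choose j v b hv h_single using exists_map_single_eq φ.toLinearMap hφ
  let q := Equiv.ofBijective j (Finite.injective_iff_bijective.mp
    (injective_of_map_single_eq φ.toLinearMap hφ hv h_single))
  refine ⟨fun k => v (q.symm k), fun k => hv _, q.symm, b, fun x k => ?_⟩
  conv_lhs => rw [← Finset.univ_sum_single x, map_sum]
  simp only [LinearEquiv.coe_toLinearMap] at h_single
  have hjq : j (q.symm k) = k := q.apply_symm_apply k
  rw [Finset.sum_apply, Finset.sum_eq_single (q.symm k), h_single, hjq, Pi.single_eq_same,
    conjIf_apply]
  · intro m _ hm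
    rw [h_single, Pi.single_eq_of_ne]
    exact fun h => hm (by rw [h]; exact (q.symm_apply_apply m).symm)
  · simp
end
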